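/- In the structure R₂, the pattern condition linking ≤₁ and ≤₂ holds: for all ordinals a, b, c, if a ≤₁ b, b ≤₁ c, and a ≤₂ c, then a ≤₂ b. -/
import Mathlib


open Ordinal

noncomputable section

/-- The least epsilon number: the least fixed point of `ξ ↦ ω ^ ξ`. -/
def eps0 : Ordinal := sInf {ξ : Ordinal | Ordinal.omega0 ^ ξ = ξ}

namespace R2

/-- Terms of the language `{≤, ≤₁, ≤₂}`: existentially quantified variables,
universally quantified variables, and parameters (ordinal constants). -/
inductive Trm : Type 1 where
  | evar : ℕ → Trm
  | avar : ℕ → Trm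
  | cst  : Ordinal → Trm

def Trm.val (v w : ℕ → Ordinal) : Trm → Ordinal
  | .evar n => v n
  | .avar n => w n
  | .cst c  => c

/-- Quantifier-free formulas in the language `{≤, ≤₁, ≤₂}`. -/
inductive QF : Type 1 where
  | le  : Trm → Trm → QF
  | le1 : Trm → Trm → QF
  | le2 : Trm → Trm → QF
  | not : QF → QF
  | and : QF → QF → QF
  | or  : QF → QF → QF

def QF.eval (r1 r2 : Ordinal → Ordinal → Prop) (v w : ℕ → Ordinal) : QF → Prop
  | .le s t  => s.val v w ≤ t.val v w
  | .le1 s t => r1 (s.val v w) (t.val v w)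
  | .le2 s t => r2 (s.val v w) (t.val v w)
  | .not φ   => ¬ φ.eval r1 r2 v w
  | .and φ ψ => φ.eval r1 r2 v w ∧ ψ.eval r1 r2 v w
  | .or φ ψ  => φ.eval r1 r2 v w ∨ ψ.eval r1 r2 v w

def Trm.NoAvar : Trm → Prop
  | .avar _ => False
  | _ => True

def QF.NoAvar : QF → Prop
  | .le s t  => s.NoAvar ∧ t.NoAvar
  | .le1 s t => s.NoAvar ∧ t.NoAvar
  | .le2 s t => s.NoAvar ∧ t.NoAvar
  | .not φ   => φ.NoAvar
  | .and φ ψ => φ.NoAvar ∧ ψ.NoAvar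
  | .or φ ψ  => φ.NoAvar ∧ ψ.NoAvar

def Trm.CstBelow (δ : Ordinal) : Trm → Prop
  | .cst c => c < δ
  | _ => True

def QF.CstBelow (δ : Ordinal) : QF → Prop
  | .le s t  => s.CstBelow δ ∧ t.CstBelow δ
  | .le1 s t => s.CstBelow δ ∧ t.CstBelow δ
  | .le2 s t => s.CstBelow δ ∧ t.CstBelow δ
  | .not φ   => φ.CstBelow δ
  | .and φ ψ => φ.CstBelow δ ∧ ψ.CstBelow δ
  | .or φ ψ  => φ.CstBelow δ ∧ ψ.CstBelow δ

/-- Satisfaction of a Σ₁-formula (an existential block in front of a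
quantifier-free formula without universal variables) in the segment of
ordinals `< δ`, with the indicated interpretations of `≤₁` and `≤₂`. -/
def Sat1 (r1 r2 : Ordinal → Ordinal → Prop) (δ : Ordinal) (φ : QF) : Prop :=
  ∃ v : ℕ → Ordinal, (∀ n, v n < δ) ∧ φ.eval r1 r2 v v

/-- Satisfaction of a Σ₂-formula (a block of existential quantifiers followed
by a block of universal quantifiers in front of a quantifier-free formula) in
the segment of ordinals `< δ`. -/
def Sat2 (r1 r2 : Ordinal → Ordinal → Prop) (δ : Ordinal) (φ : QF) : Prop :=
  ∃ v : ℕ → Ordinal, (∀ n, v n < δ) ∧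
    ∀ w : ℕ → Ordinal, (∀ n, w n < δ) → φ.eval r1 r2 v w

/-- `(α; ≤, ≤₁, ≤₂)` is a Σ₁-elementary substructure of `(β; ≤, ≤₁, ≤₂)`:
Σ₁-sentences with parameters `< α` hold in `α` iff they hold in `β`. -/
def Sig1Elem (r1 r2 : Ordinal → Ordinal → Prop) (α β : Ordinal) : Prop :=
  ∀ φ : QF, φ.NoAvar → φ.CstBelow α → (Sat1 r1 r2 α φ ↔ Sat1 r1 r2 β φ)

/-- `(α; ≤, ≤₁, ≤₂)` is a Σ₂-elementary substructure of `(β; ≤, ≤₁, ≤₂)`. -/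
def Sig2Elem (r1 r2 : Ordinal → Ordinal → Prop) (α β : Ordinal) : Prop :=
  ∀ φ : QF, φ.CstBelow α → (Sat2 r1 r2 α φ ↔ Sat2 r1 r2 β φ)

/-- The simultaneous recursive (in `β`) definition of `α ≤₁ β` (`i = false`)
and `α ≤₂ β` (`i = true`): `α ≤ᵢ β` iff `α ≤ β` and `(α; ≤, ≤₁, ≤₂)` is a
Σᵢ-elementary substructure of `(β; ≤, ≤₁, ≤₂)`, where the relations `≤₁, ≤₂`
are the restrictions to the segment below `β`, already defined by recursion. -/
noncomputable def leAux : Ordinal → Bool → Ordinal → Prop :=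
  WellFounded.fix Ordinal.lt_wf fun β IH i α =>
    α ≤ β ∧
      (match i with
        | false => Sig1Elem
        | true  => Sig2Elem)
        (fun x y => ∃ h : y < β, IH y h false x)
        (fun x y => ∃ h : y < β, IH y h true x) α β

/-- `α ≤₁ β` in the structure `R₂`. -/
def le1 (α β : Ordinal) : Prop := leAux β false α

/-- `α ≤₂ β` in the structure `R₂`. -/
def le2 (α β : Ordinal) : Prop := leAux β true α

def lt1 (α β : Ordinal) : Prop := le1 α β ∧ α < β

def lt2 (α β : Ordinal) : Prop := le2 α β ∧ α < β

/-- `h` is an isomorphism (w.r.t. `≤, ≤₁, ≤₂`) on the set `A`. -/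
def IsoOn (h : Ordinal → Ordinal) (A : Set Ordinal) : Prop :=
  ∀ x ∈ A, ∀ y ∈ A,
    (x ≤ y ↔ h x ≤ h y) ∧ (le1 x y ↔ le1 (h x) (h y)) ∧ (le2 x y ↔ le2 (h x) (h y))

/-! ### Auxiliary lemmas -/

lemma Trm.cstBelow_mono {δ δ' : Ordinal} (h : δ ≤ δ') :
    ∀ {t : Trm}, t.CstBelow δ → t.CstBelow δ'
  | .evar _, _ => trivial
  | .avar _, _ => trivial
  | .cst _, hc => lt_of_lt_of_le hc h

lemma QF.cstBelow_mono' {δ δ' : Ordinal} (h : δ ≤ δ') :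
    ∀ φ : QF, φ.CstBelow δ → φ.CstBelow δ'
  | .le _ _, ⟨hs, ht⟩ => ⟨Trm.cstBelow_mono h hs, Trm.cstBelow_mono h ht⟩
  | .le1 _ _, ⟨hs, ht⟩ => ⟨Trm.cstBelow_mono h hs, Trm.cstBelow_mono h ht⟩
  | .le2 _ _, ⟨hs, ht⟩ => ⟨Trm.cstBelow_mono h hs, Trm.cstBelow_mono h ht⟩
  | .not ψ, hc => QF.cstBelow_mono' h ψ hc
  | .and ψ χ, ⟨h1, h2⟩ => ⟨QF.cstBelow_mono' h ψ h1, QF.cstBelow_mono' h χ h2⟩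
  | .or ψ χ, ⟨h1, h2⟩ => ⟨QF.cstBelow_mono' h ψ h1, QF.cstBelow_mono' h χ h2⟩

lemma QF.cstBelow_mono {δ δ' : Ordinal} (h : δ ≤ δ') {φ : QF}
    (hc : φ.CstBelow δ) : φ.CstBelow δ' := QF.cstBelow_mono' h φ hc

lemma Trm.val_lt {δ : Ordinal} {v w : ℕ → Ordinal}
    (hv : ∀ n, v n < δ) (hw : ∀ n, w n < δ) :
    ∀ {t : Trm}, t.CstBelow δ → t.val v w < δ
  | .evar n, _ => hv n
  | .avar n, _ => hw n
  | .cst _, hc => hc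

lemma QF.eval_congr {r1 r2 r1' r2' : Ordinal → Ordinal → Prop} {β : Ordinal}
    (h1 : ∀ x y, x < β → y < β → (r1 x y ↔ r1' x y))
    (h2 : ∀ x y, x < β → y < β → (r2 x y ↔ r2' x y))
    {v w : ℕ → Ordinal} (hv : ∀ n, v n < β) (hw : ∀ n, w n < β) :
    ∀ {φ : QF}, φ.CstBelow β → (φ.eval r1 r2 v w ↔ φ.eval r1' r2' v w)
  | .le _ _, _ => Iff.rfl
  | .le1 _ _, ⟨hs, ht⟩ => h1 _ _ (Trm.val_lt hv hw hs) (Trm.val_lt hv hw ht)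
  | .le2 _ _, ⟨hs, ht⟩ => h2 _ _ (Trm.val_lt hv hw hs) (Trm.val_lt hv hw ht)
  | .not _, hc => not_congr (QF.eval_congr h1 h2 hv hw hc)
  | .and _ _, ⟨hc1, hc2⟩ =>
      and_congr (QF.eval_congr h1 h2 hv hw hc1) (QF.eval_congr h1 h2 hv hw hc2)
  | .or _ _, ⟨hc1, hc2⟩ =>
      or_congr (QF.eval_congr h1 h2 hv hw hc1) (QF.eval_congr h1 h2 hv hw hc2)

lemma Sat1_congr {r1 r2 r1' r2' : Ordinal → Ordinal → Prop} {β δ : Ordinal}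
    (hδ : δ ≤ β)
    (h1 : ∀ x y, x < β → y < β → (r1 x y ↔ r1' x y))
    (h2 : ∀ x y, x < β → y < β → (r2 x y ↔ r2' x y))
    {φ : QF} (hc : φ.CstBelow δ) :
    Sat1 r1 r2 δ φ ↔ Sat1 r1' r2' δ φ := by
  refine exists_congr fun v => and_congr_right fun hv => ?_
  exact QF.eval_congr h1 h2 (fun n => lt_of_lt_of_le (hv n) hδ)
    (fun n => lt_of_lt_of_le (hv n) hδ) (QF.cstBelow_mono hδ hc)

lemma Sat2_congr {r1 r2 r1' r2' : Ordinal → Ordinal → Prop} {β δ : Ordinal}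
    (hδ : δ ≤ β)
    (h1 : ∀ x y, x < β → y < β → (r1 x y ↔ r1' x y))
    (h2 : ∀ x y, x < β → y < β → (r2 x y ↔ r2' x y))
    {φ : QF} (hc : φ.CstBelow δ) :
    Sat2 r1 r2 δ φ ↔ Sat2 r1' r2' δ φ := by
  refine exists_congr fun v => and_congr_right fun hv => ?_
  refine forall_congr' fun w => imp_congr_right fun hw => ?_
  exact QF.eval_congr h1 h2 (fun n => lt_of_lt_of_le (hv n) hδ)
    (fun n => lt_of_lt_of_le (hw n) hδ) (QF.cstBelow_mono hδ hc)

lemma leAux_eq (β : Ordinal) : leAux β = fun i α =>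
    α ≤ β ∧
      (match i with
        | false => Sig1Elem
        | true  => Sig2Elem)
        (fun x y => ∃ _ : y < β, le1 x y)
        (fun x y => ∃ _ : y < β, le2 x y) α β := by
  show WellFounded.fix _ _ β = _
  rw [WellFounded.fix_eq]
  rfl

lemma agree1 (β : Ordinal) :
    ∀ x y : Ordinal, x < β → y < β → ((∃ _ : y < β, le1 x y) ↔ le1 x y) :=
  fun _ _ _ hy => ⟨fun ⟨_, h⟩ => h, fun h => ⟨hy, h⟩⟩

lemma agree2 (β : Ordinal) :
    ∀ x y : Ordinal, x < β → y < β → ((∃ _ : y < β, le2 x y) ↔ le2 x y) :=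
  fun _ _ _ hy => ⟨fun ⟨_, h⟩ => h, fun h => ⟨hy, h⟩⟩

lemma le1_iff (α β : Ordinal) : le1 α β ↔ α ≤ β ∧
    ∀ φ : QF, φ.NoAvar → φ.CstBelow α →
      (Sat1 le1 le2 α φ ↔ Sat1 le1 le2 β φ) := by
  rw [le1, leAux_eq]
  refine and_congr_right fun hle => forall_congr' fun φ => ?_
  refine imp_congr_right fun _ => imp_congr_right fun hc => ?_
  exact iff_congr (Sat1_congr hle (agree1 β) (agree2 β) hc)
    (Sat1_congr le_rfl (agree1 β) (agree2 β) (QF.cstBelow_mono hle hc))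

lemma le2_iff (α β : Ordinal) : le2 α β ↔ α ≤ β ∧
    ∀ φ : QF, φ.CstBelow α →
      (Sat2 le1 le2 α φ ↔ Sat2 le1 le2 β φ) := by
  rw [le2, leAux_eq]
  refine and_congr_right fun hle => forall_congr' fun φ => ?_
  refine imp_congr_right fun hc => ?_
  exact iff_congr (Sat2_congr hle (agree1 β) (agree2 β) hc)
    (Sat2_congr le_rfl (agree1 β) (agree2 β) (QF.cstBelow_mono hle hc))

/-- Substitute the existential variables by the constants `v n` and turn
universal variables into existential variables. -/
def Trm.sub (v : ℕ → Ordinal) : Trm → Trm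
  | .evar n => .cst (v n)
  | .avar n => .evar n
  | .cst c  => .cst c

def QF.sub (v : ℕ → Ordinal) : QF → QF
  | .le s t  => .le (s.sub v) (t.sub v)
  | .le1 s t => .le1 (s.sub v) (t.sub v)
  | .le2 s t => .le2 (s.sub v) (t.sub v)
  | .not φ   => .not (φ.sub v)
  | .and φ ψ => .and (φ.sub v) (ψ.sub v)
  | .or φ ψ  => .or (φ.sub v) (ψ.sub v)

lemma Trm.sub_noAvar (v : ℕ → Ordinal) : ∀ t : Trm, (t.sub v).NoAvar
  | .evar _ => trivial
  | .avar _ => trivial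
  | .cst _ => trivial

lemma QF.sub_noAvar (v : ℕ → Ordinal) : ∀ φ : QF, (φ.sub v).NoAvar
  | .le s t  => ⟨s.sub_noAvar v, t.sub_noAvar v⟩
  | .le1 s t => ⟨s.sub_noAvar v, t.sub_noAvar v⟩
  | .le2 s t => ⟨s.sub_noAvar v, t.sub_noAvar v⟩
  | .not φ   => φ.sub_noAvar v
  | .and φ ψ => ⟨φ.sub_noAvar v, ψ.sub_noAvar v⟩
  | .or φ ψ  => ⟨φ.sub_noAvar v, ψ.sub_noAvar v⟩

lemma Trm.sub_cstBelow {δ : Ordinal} {v : ℕ → Ordinal} (hv : ∀ n, v n < δ) :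
    ∀ {t : Trm}, t.CstBelow δ → (t.sub v).CstBelow δ
  | .evar n, _ => hv n
  | .avar _, _ => trivial
  | .cst _, hc => hc

lemma QF.sub_cstBelow {δ : Ordinal} {v : ℕ → Ordinal} (hv : ∀ n, v n < δ) :
    ∀ φ : QF, φ.CstBelow δ → (φ.sub v).CstBelow δ
  | .le _ _, ⟨hs, ht⟩ => ⟨Trm.sub_cstBelow hv hs, Trm.sub_cstBelow hv ht⟩
  | .le1 _ _, ⟨hs, ht⟩ => ⟨Trm.sub_cstBelow hv hs, Trm.sub_cstBelow hv ht⟩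
  | .le2 _ _, ⟨hs, ht⟩ => ⟨Trm.sub_cstBelow hv hs, Trm.sub_cstBelow hv ht⟩
  | .not ψ, hc => QF.sub_cstBelow hv ψ hc
  | .and ψ χ, ⟨h1, h2⟩ => ⟨QF.sub_cstBelow hv ψ h1, QF.sub_cstBelow hv χ h2⟩
  | .or ψ χ, ⟨h1, h2⟩ => ⟨QF.sub_cstBelow hv ψ h1, QF.sub_cstBelow hv χ h2⟩

lemma Trm.sub_val (v u w : ℕ → Ordinal) :
    ∀ t : Trm, (t.sub v).val u w = t.val v u
  | .evar _ => rfl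
  | .avar _ => rfl
  | .cst _ => rfl

lemma QF.sub_eval (r1 r2 : Ordinal → Ordinal → Prop) (v u w : ℕ → Ordinal) :
    ∀ φ : QF, ((φ.sub v).eval r1 r2 u w ↔ φ.eval r1 r2 v u)
  | .le s t  => by simp [QF.sub, QF.eval, Trm.sub_val]
  | .le1 s t => by simp [QF.sub, QF.eval, Trm.sub_val]
  | .le2 s t => by simp [QF.sub, QF.eval, Trm.sub_val]
  | .not φ   => not_congr (QF.sub_eval r1 r2 v u w φ)
  | .and φ ψ => and_congr (QF.sub_eval r1 r2 v u w φ) (QF.sub_eval r1 r2 v u w ψ)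
  | .or φ ψ  => or_congr (QF.sub_eval r1 r2 v u w φ) (QF.sub_eval r1 r2 v u w ψ)

/-- The key Σ₁-transfer trick: if `α ≤₁ β` and a quantifier-free formula with
parameters `< α` holds for all universal witnesses `< α`, then it holds for all
universal witnesses `< β`. -/
lemma up {α β : Ordinal} (h : le1 α β) {φ : QF} (hc : φ.CstBelow α)
    {v : ℕ → Ordinal} (hv : ∀ n, v n < α)
    (hall : ∀ w, (∀ n, w n < α) → φ.eval le1 le2 v w) :
    ∀ w, (∀ n, w n < β) → φ.eval le1 le2 v w := by
  intro w hw
  by_contra hneg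
  have hS : Sat1 le1 le2 β ((QF.not φ).sub v) :=
    ⟨w, hw, (QF.sub_eval le1 le2 v w w (QF.not φ)).2 hneg⟩
  have hS' : Sat1 le1 le2 α ((QF.not φ).sub v) :=
    (((le1_iff α β).1 h).2 _ (QF.sub_noAvar v _)
      (QF.sub_cstBelow hv (QF.not φ) hc)).2 hS
  obtain ⟨u, hu, hval⟩ := hS'
  exact (QF.sub_eval le1 le2 v u u (QF.not φ)).1 hval (hall u hu)

end R2

/-- In `R₂`, the pattern condition linking `≤₁` and `≤₂` holds. -/
theorem pattern_condition (a b c : Ordinal)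
    (h1 : R2.le1 a b) (h2 : R2.le1 b c) (h3 : R2.le2 a c) : R2.le2 a b := by
  have hab : a ≤ b := ((R2.le1_iff a b).1 h1).1
  have hbc : b ≤ c := ((R2.le1_iff b c).1 h2).1
  rw [R2.le2_iff]
  refine ⟨hab, fun φ hc => ?_⟩
  constructor
  · rintro ⟨v, hv, hall⟩
    exact ⟨v, fun n => lt_of_lt_of_le (hv n) hab, R2.up h1 hc hv hall⟩
  · rintro ⟨v, hv, hall⟩
    have hSc : R2.Sat2 R2.le1 R2.le2 c φ :=
      ⟨v, fun n => lt_of_lt_of_le (hv n) hbc,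
        R2.up h2 (R2.QF.cstBelow_mono hab hc) hv hall⟩
    exact (((R2.le2_iff a c).1 h3).2 φ hc).2 hSc

end
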